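/- Assume that S(h) : Φ → Φ is continuous for every h ∈ 𝒞 and that K ⊆ Φ is a compact (𝔹,Σ)-attracting set with K ∈ 𝔹. Then ω(K) is a (𝔹,Σ)-attractor of the semigroup and ω(K) = 𝒦|₀. -/

import Mathlib

open Metric Filter Topology

noncomputable section

/-- The ω-limit set of a set `B` under the multi-parametric semigroup `S`
with time arrow `Sig`. -/
def omegaSet {m : ℕ} {Φ : Type*} [MetricSpace Φ]
    (S : EuclideanSpace ℝ (Fin m) → Φ → Φ) (Sig : Set (EuclideanSpace ℝ (Fin m)))
    (B : Set Φ) : Set Φ :=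
  {u₀ | ∃ (h : ℕ → EuclideanSpace ℝ (Fin m)) (u : ℕ → Φ),
    (∀ n, h n ∈ Sig) ∧
    Tendsto (fun n => infDist (h n) (frontier Sig)) atTop atTop ∧
    (∀ n, u n ∈ B) ∧
    Tendsto (fun n => S (h n) (u n)) atTop (𝓝 u₀)}

/-- `K` is a `(𝔹,Σ)`-attracting set for the semigroup `S`. -/
def IsAttractingSet {m : ℕ} {Φ : Type*} [MetricSpace Φ]
    (S : EuclideanSpace ℝ (Fin m) → Φ → Φ) (Sig : Set (EuclideanSpace ℝ (Fin m)))
    (Bor : Set (Set Φ)) (K : Set Φ) : Prop :=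
  ∀ B ∈ Bor, ∀ ε : ℝ, 0 < ε → ∃ D : ℝ, 0 < D ∧
    ∀ h ∈ Sig, infDist h (frontier Sig) ≥ D → S h '' B ⊆ thickening ε K

/-- `A` is a `(𝔹,Σ)`-attractor: compact, strictly invariant and `(𝔹,Σ)`-attracting. -/
def IsAttractor {m : ℕ} {Φ : Type*} [MetricSpace Φ]
    (S : EuclideanSpace ℝ (Fin m) → Φ → Φ) (C Sig : Set (EuclideanSpace ℝ (Fin m)))
    (Bor : Set (Set Φ)) (A : Set Φ) : Prop :=
  IsCompact A ∧ (∀ h ∈ C, S h '' A = A) ∧ IsAttractingSet S Sig Bor A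

/-- `u : ℝ^m → Φ` is a complete bounded trajectory of the semigroup `S` over the cone `C`,
with respect to the bornology `Bor`. -/
def IsCompleteBoundedTrajectory {m : ℕ} {Φ : Type*} [MetricSpace Φ]
    (S : EuclideanSpace ℝ (Fin m) → Φ → Φ) (C : Set (EuclideanSpace ℝ (Fin m)))
    (Bor : Set (Set Φ)) (u : EuclideanSpace ℝ (Fin m) → Φ) : Prop :=
  (∀ h ∈ C, ∀ s, S h (u s) = u (s + h)) ∧ ∃ Bu ∈ Bor, Set.range u ⊆ Bu

/-!
Write `ω(B)` as the set of cluster points of the filter `orbitTail S Sig B`, the image of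
`(h, u) ↦ S h u` as `h` goes to infinity in `Σ` and `u ∈ B`. Translating by a fixed vector does
not change what it means to go to infinity in `Σ`, so each `S h`, `h ∈ 𝒞`, maps this filter
onto itself. That the compact set `K` attracts `B` says that the filter of `B` converges to
`𝓝ˢ K`, and compactness of `K` then supplies cluster points: this gives `ω(K) ⊆ K`, the
backward invariance of `ω(K)`, and the attraction of `K` by `ω(K)`. Every `B ∈ 𝔹` is then
attracted by `ω(K)` through one fixed `S g₀`, which maps `K` into a given neighbourhood of `ω(K)`.

A complete bounded trajectory lies in `ω` of its range, hence in `K` and then in `ω(K)`.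
Conversely, a point of the invariant set `ω(K)` is continued backwards along an interior
direction `ξ` of `𝒞`, and `u s` is read off as `S (s + n • ξ)` applied to the `n`-th backward
point, for any `n` large enough that `s + n • ξ ∈ 𝒞`.
-/

section Compact

variable {X Y : Type*} [TopologicalSpace X] {K : Set X}

theorem IsCompact.ultrafilter_le_nhds_of_le_nhdsSet (hK : IsCompact K) (f : Ultrafilter X)
    (hf : ↑f ≤ 𝓝ˢ K) : ∃ x ∈ K, ↑f ≤ 𝓝 x := by
  by_contra! h
  have hdisj : Disjoint (𝓝ˢ K) (f : Filter X) := hK.disjoint_nhdsSet_left.2 fun x hx => by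
    simpa [← Ultrafilter.clusterPt_iff, clusterPt_iff_not_disjoint] using h x hx
  exact f.neBot.ne (disjoint_self.1 (hdisj.mono_left hf))

theorem IsCompact.le_nhdsSet_setOf_clusterPt (hK : IsCompact K) {l : Filter X}
    (hl : l ≤ 𝓝ˢ K) : l ≤ 𝓝ˢ {x | ClusterPt x l} := by
  refine le_iff_ultrafilter.2 fun f hf => ?_
  obtain ⟨x, -, hx⟩ := hK.ultrafilter_le_nhds_of_le_nhdsSet f (hf.trans hl)
  exact hx.trans (nhds_le_nhdsSet ((Ultrafilter.clusterPt_iff.2 hx).mono hf))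

theorem IsCompact.exists_clusterPt_of_clusterPt_map [TopologicalSpace Y] [T2Space Y]
    (hK : IsCompact K) {l : Filter X} (hl : l ≤ 𝓝ˢ K) {f : X → Y} (hf : Continuous f) {y : Y}
    (hy : ClusterPt y (map f l)) : ∃ x ∈ K, ClusterPt x l ∧ f x = y := by
  obtain ⟨U, hUl, hUy⟩ := mapClusterPt_iff_ultrafilter.1 hy
  obtain ⟨x, hxK, hx⟩ := hK.ultrafilter_le_nhds_of_le_nhdsSet U (hUl.trans hl)
  exact ⟨x, hxK, (Ultrafilter.clusterPt_iff.2 hx).mono hUl,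
    tendsto_nhds_unique ((hf.tendsto x).comp hx) hUy⟩

end Compact

section AwayFromFrontier

variable {E : Type*}

def awayFromFrontier [PseudoMetricSpace E] (s : Set E) : Filter E :=
  comap (fun h => infDist h (frontier s)) atTop ⊓ 𝓟 s

instance [PseudoMetricSpace E] (s : Set E) : (awayFromFrontier s).IsCountablyGenerated := by
  unfold awayFromFrontier; infer_instance

variable [PseudoMetricSpace E] {s : Set E}

theorem eventually_mem_awayFromFrontier : ∀ᶠ h in awayFromFrontier s, h ∈ s :=
  mem_inf_of_right (mem_principal_self s)

theorem tendsto_infDist_awayFromFrontier :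
    Tendsto (fun h => infDist h (frontier s)) (awayFromFrontier s) atTop :=
  tendsto_comap.mono_left inf_le_left

theorem eventually_awayFromFrontier_iff {p : E → Prop} :
    (∀ᶠ h in awayFromFrontier s, p h) ↔
      ∃ D : ℝ, 0 < D ∧ ∀ h ∈ s, infDist h (frontier s) ≥ D → p h := by
  simp only [awayFromFrontier, eventually_inf_principal, eventually_comap, eventually_atTop]
  constructor
  · rintro ⟨D, hD⟩
    exact ⟨max D 1, by positivity, fun h hs hh => hD _ (le_of_max_le_left hh) h rfl hs⟩
  · rintro ⟨D, -, hD⟩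
    exact ⟨D, fun _ hb h hh hs => hD h hs (hh ▸ hb)⟩

theorem tendsto_awayFromFrontier_iff {α : Type*} {l : Filter α} {f : α → E} :
    Tendsto f l (awayFromFrontier s) ↔
      Tendsto (fun a => infDist (f a) (frontier s)) l atTop ∧ ∀ᶠ a in l, f a ∈ s := by
  simp [awayFromFrontier, tendsto_inf, tendsto_comap_iff, Function.comp_def]

theorem awayFromFrontier_neBot (h : ∀ D : ℝ, 0 < D → ∃ x ∈ s, infDist x (frontier s) ≥ D) :
    (awayFromFrontier s).NeBot := by
  refine ⟨fun hbot => ?_⟩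
  have hfalse : ∀ᶠ _ in awayFromFrontier s, False := hbot ▸ eventually_bot
  obtain ⟨D, hD, hD'⟩ := eventually_awayFromFrontier_iff.1 hfalse
  obtain ⟨x, hx, hxD⟩ := h D hD
  exact hD' x hx hxD

end AwayFromFrontier

section NormedSpace

variable {E : Type*} [NormedAddCommGroup E] [NormedSpace ℝ E]

theorem ball_infDist_frontier_subset {s : Set E} {x : E} (hx : x ∈ s) :
    ball x (infDist x (frontier s)) ⊆ s := by
  have hfr : ∀ y ∈ ball x (infDist x (frontier s)), y ∉ frontier s := fun y hy hys =>
    (infDist_le_dist_of_mem hys).not_gt (by rwa [mem_ball, dist_comm] at hy)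
  have hint : ∀ y ∈ ball x (infDist x (frontier s)), y ∈ closure s → y ∈ interior s :=
    fun y hy hys => by_contra fun h => hfr y hy ⟨hys, h⟩
  rcases (ball x (infDist x (frontier s))).eq_empty_or_nonempty with hempty | hne
  · simp [hempty]
  have hxb : x ∈ ball x (infDist x (frontier s)) := mem_ball_self (nonempty_ball.1 hne)
  refine ((convex_ball _ _).isPreconnected.subset_of_closure_inter_subset isOpen_interior
    ⟨x, hxb, hint x hxb (subset_closure hx)⟩ fun y ⟨hy, hyb⟩ => ?_).trans interior_subset
  exact hint y hyb (closure_mono interior_subset hy)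

theorem tendsto_add_const_awayFromFrontier (s : Set E) (g : E) :
    Tendsto (· + g) (awayFromFrontier s) (awayFromFrontier s) := by
  refine tendsto_awayFromFrontier_iff.2 ⟨tendsto_atTop_mono (fun h => ?_)
    (tendsto_atTop_add_const_right _ (-‖g‖) tendsto_infDist_awayFromFrontier), ?_⟩
  · have := infDist_le_infDist_add_dist (x := h) (y := h + g) (s := frontier s)
    rw [dist_self_add_right] at this
    linarith
  · filter_upwards [eventually_mem_awayFromFrontier,
      tendsto_infDist_awayFromFrontier.eventually_gt_atTop ‖g‖] with h hs hg
    exact ball_infDist_frontier_subset hs (by rwa [mem_ball, dist_self_add_left])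

theorem map_add_const_awayFromFrontier (s : Set E) (g : E) :
    map (· + g) (awayFromFrontier s) = awayFromFrontier s := by
  refine le_antisymm (tendsto_add_const_awayFromFrontier s g) ?_
  calc awayFromFrontier s = map (· + g) (map (· + -g) (awayFromFrontier s)) := by
        simp [map_map, Function.comp_def]
    _ ≤ map (· + g) (awayFromFrontier s) := map_mono (tendsto_add_const_awayFromFrontier s (-g))

theorem eventually_add_nsmul_mem_of_mem_interior {C : Set E}
    (hCcone : ∀ t : ℝ, 0 ≤ t → ∀ h ∈ C, t • h ∈ C) {ξ : E} (hξ : ξ ∈ interior C) (s : E) :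
    ∀ᶠ n : ℕ in atTop, s + n • ξ ∈ C := by
  obtain ⟨r, hr, hball⟩ := Metric.isOpen_iff.1 isOpen_interior ξ hξ
  filter_upwards [tendsto_natCast_atTop_atTop.eventually_gt_atTop (‖s‖ / r)] with n hn
  have hn₀ : (0 : ℝ) < n := lt_of_le_of_lt (by positivity) hn
  have hmem : ξ + (n : ℝ)⁻¹ • s ∈ C := interior_subset <| hball <| by
    rwa [mem_ball, dist_self_add_left, norm_smul, norm_inv, Real.norm_natCast,
      inv_mul_lt_iff₀ hn₀, ← div_lt_iff₀ hr]
  have := hCcone n hn₀.le _ hmem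
  rwa [smul_add, smul_inv_smul₀ hn₀.ne', add_comm, Nat.cast_smul_eq_nsmul] at this

end NormedSpace

theorem exists_backward_orbit {α : Type*} {f : α → α} {A : Set α} (hA : A ⊆ f '' A) {z : α}
    (hz : z ∈ A) : ∃ w : ℕ → α, w 0 = z ∧ (∀ n, w n ∈ A) ∧ ∀ n, f (w (n + 1)) = w n := by
  choose! g hgA hfg using fun y (hy : y ∈ A) => hA hy
  have hmaps : Set.MapsTo g A A := hgA
  refine ⟨fun n => g^[n] z, rfl, fun n => hmaps.iterate n hz, fun n => ?_⟩
  simp only [Function.iterate_succ_apply']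
  exact hfg _ (hmaps.iterate n hz)

theorem exists_trajectory_of_image_eq {E Φ : Type*} [NormedAddCommGroup E] [NormedSpace ℝ E]
    {C : Set E} {S : E → Φ → Φ} (hCint : (interior C).Nonempty)
    (hCcone : ∀ t : ℝ, 0 ≤ t → ∀ h ∈ C, t • h ∈ C)
    (hSadd : ∀ h₁ ∈ C, ∀ h₂ ∈ C, S (h₁ + h₂) = S h₁ ∘ S h₂)
    {A : Set Φ} (hA : ∀ h ∈ C, S h '' A = A) {z : Φ} (hz : z ∈ A) :
    ∃ u : E → Φ, (∀ h ∈ C, ∀ s, S h (u s) = u (s + h)) ∧ Set.range u ⊆ A ∧ u 0 = z := by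
  obtain ⟨ξ, hξ⟩ := hCint
  have hξC : ξ ∈ C := interior_subset hξ
  have hnsmul : ∀ n : ℕ, n • ξ ∈ C := fun n => by
    rw [← Nat.cast_smul_eq_nsmul ℝ]
    exact hCcone _ n.cast_nonneg ξ hξC
  obtain ⟨w, rfl, hwA, hw⟩ := exists_backward_orbit (hA ξ hξC).superset hz
  have hstab : ∀ s n, (∀ k ≥ n, s + k • ξ ∈ C) →
      ∀ k ≥ n, S (s + k • ξ) (w k) = S (s + n • ξ) (w n) := by
    intro s n hC k hk
    induction k, hk using Nat.le_induction with
    | base => rfl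
    | succ k hk ih =>
      rw [← ih, succ_nsmul, ← add_assoc, hSadd _ (hC k hk) ξ hξC, Function.comp_apply, hw]
  choose N hN using fun s => eventually_atTop.1 (eventually_add_nsmul_mem_of_mem_interior hCcone hξ s)
  have hu : ∀ s, ∀ k ≥ N s, S (s + k • ξ) (w k) = S (s + N s • ξ) (w (N s)) :=
    fun s => hstab s (N s) (hN s)
  refine ⟨fun s => S (s + N s • ξ) (w (N s)), fun h hh s => ?_, ?_, ?_⟩
  · set k := max (N s) (N (s + h))
    have hsk : s + k • ξ ∈ C := hN s k (le_max_left _ _)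
    calc S h (S (s + N s • ξ) (w (N s))) = S h (S (s + k • ξ) (w k)) := by
          rw [hu s k (le_max_left _ _)]
      _ = S (s + h + k • ξ) (w k) := by
          rw [show s + h + k • ξ = h + (s + k • ξ) by abel, hSadd h hh _ hsk, Function.comp_apply]
      _ = S (s + h + N (s + h) • ξ) (w (N (s + h))) := hu (s + h) k (le_max_right _ _)
  · rintro _ ⟨s, rfl⟩
    exact (hA _ (hN s _ le_rfl)).subset ⟨w (N s), hwA _, rfl⟩
  · have hC₀ : ∀ k ≥ 1, (0 : E) + k • ξ ∈ C := fun k _ => (zero_add (k • ξ)).symm ▸ hnsmul k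
    dsimp only
    rw [← hu 0 _ (le_max_right 1 _), hstab 0 1 hC₀ _ (le_max_left _ _), zero_add, one_nsmul, hw]

def orbitTail {E Φ : Type*} [PseudoMetricSpace E] (S : E → Φ → Φ) (Sig : Set E) (B : Set Φ) :
    Filter Φ :=
  map (Function.uncurry S) (awayFromFrontier Sig ×ˢ 𝓟 B)

theorem map_orbitTail {E Φ : Type*} [NormedAddCommGroup E] [NormedSpace ℝ E]
    {C Sig : Set E} {S : E → Φ → Φ} (hSigC : Sig ⊆ C)
    (hSadd : ∀ h₁ ∈ C, ∀ h₂ ∈ C, S (h₁ + h₂) = S h₁ ∘ S h₂) {h : E} (hh : h ∈ C) (B : Set Φ) :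
    map (S h) (orbitTail S Sig B) = orbitTail S Sig B := by
  have hshift : S h ∘ Function.uncurry S =ᶠ[awayFromFrontier Sig ×ˢ 𝓟 B]
      Function.uncurry S ∘ Prod.map (· + h) id := by
    filter_upwards [(eventually_mem_awayFromFrontier (s := Sig)).prod_inl (𝓟 B)] with ⟨g, u⟩ hg
    simp [add_comm g h, hSadd h hh g (hSigC hg)]
  rw [orbitTail, map_map, map_congr hshift, ← map_map, ← prod_map_left,
    map_add_const_awayFromFrontier]

section OmegaLimit

variable {m : ℕ} {Φ : Type*} [MetricSpace Φ] {C Sig : Set (EuclideanSpace ℝ (Fin m))}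
  {S : EuclideanSpace ℝ (Fin m) → Φ → Φ} {Bor : Set (Set Φ)} {B K : Set Φ}

theorem mem_omegaSet_iff_exists_seq {z : Φ} : z ∈ omegaSet S Sig B ↔
    ∃ p : ℕ → EuclideanSpace ℝ (Fin m) × Φ, Tendsto p atTop (awayFromFrontier Sig ×ˢ 𝓟 B) ∧
      Tendsto (Function.uncurry S ∘ p) atTop (𝓝 z) := by
  constructor
  · rintro ⟨h, u, hSig, hfar, hu, hz⟩
    exact ⟨fun n => (h n, u n), (tendsto_awayFromFrontier_iff.2 ⟨hfar, .of_forall hSig⟩).prodMk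
      (tendsto_principal.2 (.of_forall hu)), hz⟩
  · rintro ⟨p, hp, hz⟩
    obtain ⟨hfar, hSig⟩ := tendsto_awayFromFrontier_iff.1 (tendsto_fst.comp hp)
    obtain ⟨N, hN⟩ := eventually_atTop.1 (hSig.and (tendsto_principal.1 (tendsto_snd.comp hp)))
    have hshift := tendsto_add_atTop_nat N
    exact ⟨fun n => (p (n + N)).1, fun n => (p (n + N)).2,
      fun n => (hN _ (Nat.le_add_left N n)).1, hfar.comp hshift,
      fun n => (hN _ (Nat.le_add_left N n)).2, hz.comp hshift⟩

theorem omegaSet_eq_setOf_clusterPt :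
    omegaSet S Sig B = {z | ClusterPt z (orbitTail S Sig B)} := by
  ext z
  rw [mem_omegaSet_iff_exists_seq]
  constructor
  · rintro ⟨p, hp, hz⟩
    exact MapClusterPt.of_comp hp hz.mapClusterPt
  · intro hz
    obtain ⟨p, hpz, hp⟩ := MapClusterPt.exists_seq_tendsto hz
    exact ⟨p, hp, hpz⟩

theorem isClosed_omegaSet : IsClosed (omegaSet S Sig B) := by
  rw [omegaSet_eq_setOf_clusterPt]
  exact isClosed_setOfPred_clusterPt

theorem isAttractingSet_iff_orbitTail_le_nhdsSet (hK : IsCompact K) :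
    IsAttractingSet S Sig Bor K ↔ ∀ B ∈ Bor, orbitTail S Sig B ≤ 𝓝ˢ K := by
  simp only [IsAttractingSet, Set.image_subset_iff, (hasBasis_nhdsSet_thickening hK).ge_iff,
    orbitTail, mem_map, mem_prod_principal, ← eventually_iff, eventually_awayFromFrontier_iff]
  rfl

theorem omegaSet_subset (hK : IsCompact K) (hB : orbitTail S Sig B ≤ 𝓝ˢ K) :
    omegaSet S Sig B ⊆ K := by
  intro z hz
  have hz' : ClusterPt z (map id (orbitTail S Sig B)) := by
    rw [map_id]
    rwa [omegaSet_eq_setOf_clusterPt] at hz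
  obtain ⟨x, hxK, -, rfl⟩ := hK.exists_clusterPt_of_clusterPt_map hB continuous_id hz'
  exact hxK

theorem orbitTail_le_nhdsSet_omegaSet (hK : IsCompact K) (hB : orbitTail S Sig B ≤ 𝓝ˢ K) :
    orbitTail S Sig B ≤ 𝓝ˢ (omegaSet S Sig B) := by
  rw [omegaSet_eq_setOf_clusterPt]
  exact hK.le_nhdsSet_setOf_clusterPt hB

theorem image_omegaSet (hSigC : Sig ⊆ C) (hSadd : ∀ h₁ ∈ C, ∀ h₂ ∈ C, S (h₁ + h₂) = S h₁ ∘ S h₂)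
    (hScont : ∀ h ∈ C, Continuous (S h)) (hK : IsCompact K) (hB : orbitTail S Sig B ≤ 𝓝ˢ K)
    {h : EuclideanSpace ℝ (Fin m)} (hh : h ∈ C) :
    S h '' omegaSet S Sig B = omegaSet S Sig B := by
  have hmap := map_orbitTail hSigC hSadd hh B
  rw [omegaSet_eq_setOf_clusterPt]
  refine subset_antisymm ?_ fun z hz => ?_
  · rintro _ ⟨z, hz, rfl⟩
    exact hz.map (hScont h hh).continuousAt hmap.le
  · rw [← hmap] at hz
    obtain ⟨x, -, hx, rfl⟩ := hK.exists_clusterPt_of_clusterPt_map hB (hScont h hh) hz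
    exact ⟨x, hx, rfl⟩

theorem orbitTail_le_nhdsSet_trans (hSigC : Sig ⊆ C)
    (hSadd : ∀ h₁ ∈ C, ∀ h₂ ∈ C, S (h₁ + h₂) = S h₁ ∘ S h₂)
    (hScont : ∀ h ∈ C, Continuous (S h)) [(awayFromFrontier Sig).NeBot] {A : Set Φ}
    (hBK : orbitTail S Sig B ≤ 𝓝ˢ K) (hKA : orbitTail S Sig K ≤ 𝓝ˢ A) :
    orbitTail S Sig B ≤ 𝓝ˢ A := by
  refine (hasBasis_nhdsSet A).ge_iff.2 fun U ⟨hU, hAU⟩ => ?_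
  have hKU : ∀ᶠ g in awayFromFrontier Sig, ∀ u ∈ K, S g u ∈ U := by
    have := hKA (hU.mem_nhdsSet.2 hAU)
    rw [orbitTail, mem_map, mem_prod_principal] at this
    exact this
  obtain ⟨g, hg, hgU⟩ := (eventually_mem_awayFromFrontier.and hKU).exists
  rw [← map_orbitTail hSigC hSadd (hSigC hg) B]
  exact hBK ((hU.preimage (hScont g (hSigC hg))).mem_nhdsSet.2 hgU)

theorem mem_omegaSet_of_trajectory (hSigC : Sig ⊆ C) [(awayFromFrontier Sig).NeBot]
    {u : EuclideanSpace ℝ (Fin m) → Φ} (hu : ∀ h ∈ C, ∀ s, S h (u s) = u (s + h))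
    (hB : Set.range u ⊆ B) (s : EuclideanSpace ℝ (Fin m)) : u s ∈ omegaSet S Sig B := by
  obtain ⟨H, hH⟩ := exists_seq_tendsto (awayFromFrontier Sig)
  refine mem_omegaSet_iff_exists_seq.2 ⟨fun n => (H n, u (s - H n)),
    hH.prodMk (tendsto_principal.2 (.of_forall fun n => hB ⟨_, rfl⟩)), tendsto_const_nhds.congr' ?_⟩
  filter_upwards [hH.eventually eventually_mem_awayFromFrontier] with n hn
  simp [hu _ (hSigC hn)]

end OmegaLimit

theorem omegaSet_of_attracting_set_isAttractor_general
    {m : ℕ} {Φ : Type*} [MetricSpace Φ]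
    (C Sig : Set (EuclideanSpace ℝ (Fin m)))
    (S : EuclideanSpace ℝ (Fin m) → Φ → Φ) (Bor : Set (Set Φ))
    (hCint : (interior C).Nonempty)
    (hCcone : ∀ t : ℝ, 0 ≤ t → ∀ h ∈ C, t • h ∈ C)
    (hSadd : ∀ h₁ ∈ C, ∀ h₂ ∈ C, S (h₁ + h₂) = S h₁ ∘ S h₂)
    (hScont : ∀ h ∈ C, Continuous (S h))
    (hSigC : Sig ⊆ C)
    (hcof : ∀ D : ℝ, 0 < D → ∃ h ∈ Sig, infDist h (frontier Sig) ≥ D)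
    (K : Set Φ) (hK : IsCompact K) (hKattr : IsAttractingSet S Sig Bor K)
    (hKBor : K ∈ Bor) :
    IsAttractor S C Sig Bor (omegaSet S Sig K) ∧
    omegaSet S Sig K = {u₀ | ∃ u : EuclideanSpace ℝ (Fin m) → Φ,
      IsCompleteBoundedTrajectory S C Bor u ∧ u 0 = u₀} := by
  have := awayFromFrontier_neBot hcof
  have hattr := (isAttractingSet_iff_orbitTail_le_nhdsSet hK).1 hKattr
  have hωK : omegaSet S Sig K ⊆ K := omegaSet_subset hK (hattr K hKBor)
  have hωcompact : IsCompact (omegaSet S Sig K) := hK.of_isClosed_subset isClosed_omegaSet hωK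
  have hωinv : ∀ h ∈ C, S h '' omegaSet S Sig K = omegaSet S Sig K :=
    fun h hh => image_omegaSet hSigC hSadd hScont hK (hattr K hKBor) hh
  have hωattr : IsAttractingSet S Sig Bor (omegaSet S Sig K) :=
    (isAttractingSet_iff_orbitTail_le_nhdsSet hωcompact).2 fun B hB =>
      orbitTail_le_nhdsSet_trans hSigC hSadd hScont (hattr B hB)
        (orbitTail_le_nhdsSet_omegaSet hK (hattr K hKBor))
  refine ⟨⟨hωcompact, hωinv, hωattr⟩, Set.ext fun z => ⟨fun hz => ?_, ?_⟩⟩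
  · obtain ⟨u, hu, hrange, rfl⟩ := exists_trajectory_of_image_eq hCint hCcone hSadd hωinv hz
    exact ⟨u, ⟨hu, K, hKBor, hrange.trans hωK⟩, rfl⟩
  · rintro ⟨u, ⟨hu, Bu, hBu, hrange⟩, rfl⟩
    have hrangeK : Set.range u ⊆ K := by
      rintro _ ⟨s, rfl⟩
      exact omegaSet_subset hK (hattr Bu hBu) (mem_omegaSet_of_trajectory hSigC hu hrange s)
    exact mem_omegaSet_of_trajectory hSigC hu hrangeK 0

/-- If all `S h` are continuous and `K` is a compact `(𝔹,Σ)`-attracting set with `K ∈ 𝔹`,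
then `ω(K)` is a `(𝔹,Σ)`-attractor and `ω(K) = 𝒦|₀`. -/
theorem omegaSet_of_attracting_set_isAttractor
    {m : ℕ} {Φ : Type*} [MetricSpace Φ] (hm : 1 ≤ m)
    (C Sig : Set (EuclideanSpace ℝ (Fin m)))
    (S : EuclideanSpace ℝ (Fin m) → Φ → Φ) (Bor : Set (Set Φ))
    (hCclosed : IsClosed C) (hCint : (interior C).Nonempty)
    (hC0 : (0 : EuclideanSpace ℝ (Fin m)) ∈ C)
    (hCadd : ∀ h₁ ∈ C, ∀ h₂ ∈ C, h₁ + h₂ ∈ C)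
    (hCcone : ∀ t : ℝ, 0 ≤ t → ∀ h ∈ C, t • h ∈ C)
    (hS0 : S 0 = id)
    (hSadd : ∀ h₁ ∈ C, ∀ h₂ ∈ C, S (h₁ + h₂) = S h₁ ∘ S h₂)
    (hScont : ∀ h ∈ C, Continuous (S h))
    (hSigne : Sig.Nonempty) (hSigC : Sig ⊆ C)
    (hfr : frontier C ⊆ frontier Sig)
    (hcof : ∀ D : ℝ, 0 < D → ∃ h ∈ Sig, infDist h (frontier Sig) ≥ D)
    (K : Set Φ) (hK : IsCompact K) (hKattr : IsAttractingSet S Sig Bor K)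
    (hKBor : K ∈ Bor) :
    IsAttractor S C Sig Bor (omegaSet S Sig K) ∧
    omegaSet S Sig K = {u₀ | ∃ u : EuclideanSpace ℝ (Fin m) → Φ,
      IsCompleteBoundedTrajectory S C Bor u ∧ u 0 = u₀} :=
  omegaSet_of_attracting_set_isAttractor_general C Sig S Bor hCint hCcone hSadd hScont hSigC hcof K
    hK hKattr hKBor
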